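/- Let 𝓘 be a finite index set of cardinality n and let (X_i)_{i∈𝓘} be a collection of square-integrable, mean-zero d-dimensional random vectors. For each i ∈ 𝓘, let A_i ⊆ 𝓘 be a set containing i such that X_i is independent of the collection (X_j)_{j ∈ A_i^c}. Let I be uniformly distributed on 𝓘 and independent of (X_i)_{i∈𝓘}. Then (W, W', G) = ( Σ_{i∈𝓘} X_i , Σ_{i ∈ 𝓘 \ A_I} X_i , −n X_I ) is a d-dimensional Stein coupling. -/

import Mathlib

/-!
Conditioning on the value of the uniform index `I`, which is independent of `X`, gives
`E[G ⬝ F(W')] = -∑ₖ E[X_k ⬝ F(∑_{i ∉ A_k} X_i)]` and `E[G ⬝ F(W)] = -∑ₖ E[X_k ⬝ F(W)]`.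
Every term of the first sum vanishes, since `X_k` is centred and independent of
`(X_i)_{i ∉ A_k}`, while the second sum is `-E[W ⬝ F(W)]`.
-/

open MeasureTheory ProbabilityTheory

noncomputable section

def IsSteinCoupling {Ω : Type*} [MeasurableSpace Ω] (μ : Measure Ω) {d : ℕ}
    (W W' G : Ω → Fin d → ℝ) : Prop :=
  Measurable W ∧ Measurable W' ∧ Measurable G ∧
    MemLp W 2 μ ∧ MemLp W' 2 μ ∧ MemLp G 2 μ ∧
    ∀ F : (Fin d → ℝ) → (Fin d → ℝ), Measurable F →
      Integrable (fun ω => ∑ i, G ω i * F (W' ω) i) μ →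
      Integrable (fun ω => ∑ i, G ω i * F (W ω) i) μ →
      Integrable (fun ω => ∑ i, W ω i * F (W ω) i) μ →
      (∫ ω, ∑ i, G ω i * F (W' ω) i ∂μ) - (∫ ω, ∑ i, G ω i * F (W ω) i ∂μ)
        = ∫ ω, ∑ i, W ω i * F (W ω) i ∂μ

@[fun_prop]
lemma Measurable.dotProduct {α κ : Type*} [MeasurableSpace α] [Fintype κ] {f g : α → κ → ℝ}
    (hf : Measurable f) (hg : Measurable g) : Measurable fun a => f a ⬝ᵥ g a :=
  (continuous_fst.dotProduct continuous_snd).measurable.comp (hf.prodMk hg)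

section RandomIndex

variable {Ω ι E : Type*} {I : Ω → ι}

lemma sum_indicator_preimage_singleton [Fintype ι] [AddCommMonoid E] (I : Ω → ι)
    (f : ι → Ω → E) (ω : Ω) : ∑ k, (I ⁻¹' {k}).indicator (f k) ω = f (I ω) ω := by
  rw [Finset.sum_eq_single (I ω)]
  · simp
  · intro k _ hk
    exact Set.indicator_of_notMem (show ω ∉ I ⁻¹' {k} from Ne.symm hk) (f k)
  · simp

lemma indicator_preimage_singleton_apply (I : Ω → ι) (f : ι → Ω → ℝ) (k : ι) (ω : Ω) :
    (I ⁻¹' {k}).indicator (fun ω => f (I ω) ω) ω = ({k} : Set ι).indicator 1 (I ω) * f k ω := by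
  by_cases h : I ω = k <;> simp [h]

variable [MeasurableSpace Ω] [MeasurableSpace ι] [MeasurableSingletonClass ι]

lemma measurable_comp_randomIndex [Countable ι] [MeasurableSpace E] (f : ι → Ω → E)
    (hI : Measurable I) (hf : ∀ k, Measurable (f k)) : Measurable fun ω => f (I ω) ω :=
  (measurable_from_prod_countable_left (f := fun p : Ω × ι => f p.2 p.1) hf).comp
    (measurable_id.prodMk hI)

lemma memLp_comp_randomIndex [Fintype ι] [NormedAddCommGroup E] {p : ENNReal} {μ : Measure Ω}
    (f : ι → Ω → E) (hI : Measurable I) (hf : ∀ k, MemLp (f k) p μ) :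
    MemLp (fun ω => f (I ω) ω) p μ := by
  simp_rw [← sum_indicator_preimage_singleton I f]
  exact memLp_finsetSum _ fun k _ => (hf k).indicator (hI (measurableSet_singleton k))

end RandomIndex

namespace ProbabilityTheory.IndepFun

section IndependentIndex

variable {Ω ι E : Type*} [MeasurableSpace Ω] [MeasurableSpace ι] [MeasurableSingletonClass ι]
  [MeasurableSpace E] {μ : Measure Ω} {I : Ω → ι} {Y : Ω → E}

lemma integral_indicator_singleton_mul (hIY : IndepFun I Y μ) (hI : Measurable I)
    (hY : Measurable Y) {g : E → ℝ} (hg : Measurable g) (k : ι) :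
    ∫ ω, ({k} : Set ι).indicator 1 (I ω) * g (Y ω) ∂μ
      = μ.real (I ⁻¹' {k}) * ∫ ω, g (Y ω) ∂μ := by
  have hk : MeasurableSet ({k} : Set ι) := measurableSet_singleton k
  rw [hIY.integral_fun_comp_mul_comp hI.aemeasurable hY.aemeasurable
    (measurable_one.indicator hk).aestronglyMeasurable hg.aestronglyMeasurable]
  simp_rw [← Set.indicator_comp_right, Pi.one_comp]
  rw [integral_indicator_one (hI hk)]

variable {H : ι → E → ℝ}

lemma integrable_comp_of_integrable_comp_randomIndex (hIY : IndepFun I Y μ)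
    (hI : Measurable I) (hY : Measurable Y) (hH : ∀ k, Measurable (H k))
    (hint : Integrable (fun ω => H (I ω) (Y ω)) μ) {k : ι} (hk : μ (I ⁻¹' {k}) ≠ 0) :
    Integrable (fun ω => H k (Y ω)) μ := by
  have hsing : MeasurableSet ({k} : Set ι) := measurableSet_singleton k
  have hprod : Integrable (fun ω => ({k} : Set ι).indicator 1 (I ω) * H k (Y ω)) μ := by
    simp_rw [← indicator_preimage_singleton_apply I (fun k ω => H k (Y ω))]
    exact hint.indicator (hI hsing)
  refine (hIY.comp (measurable_one.indicator hsing) (hH k)).integrable_right_of_integrable_op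
    (· * ·) 1 one_ne_zero (fun x y => by simp [enorm_mul]) hprod
    ((measurable_one.indicator hsing).comp hI).aestronglyMeasurable
    ((hH k).comp hY).aestronglyMeasurable fun h0 => hk (measure_mono_null ?_ (ae_iff.1 h0))
  intro ω hω
  simpa using hω

variable [Fintype ι]

lemma integral_comp_eq_sum (hIY : IndepFun I Y μ) (hI : Measurable I)
    (hY : Measurable Y) (hH : ∀ k, Measurable (H k))
    (hint : Integrable (fun ω => H (I ω) (Y ω)) μ) :
    ∫ ω, H (I ω) (Y ω) ∂μ = ∑ k, μ.real (I ⁻¹' {k}) * ∫ ω, H k (Y ω) ∂μ := by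
  rw [← funext (sum_indicator_preimage_singleton I fun _ ω => H (I ω) (Y ω)),
    integral_finsetSum _ fun k _ => hint.indicator (hI (measurableSet_singleton k))]
  simp_rw [indicator_preimage_singleton_apply I (fun k ω => H k (Y ω)),
    hIY.integral_indicator_singleton_mul hI hY (hH _)]

lemma integral_comp_eq_average (hIY : IndepFun I Y μ) (hI : Measurable I)
    (hY : Measurable Y) (hH : ∀ k, Measurable (H k))
    (hunif : ∀ k, μ.map I {k} = 1 / Fintype.card ι)
    (hint : Integrable (fun ω => H (I ω) (Y ω)) μ) :
    ∫ ω, H (I ω) (Y ω) ∂μ = (Fintype.card ι : ℝ)⁻¹ * ∫ ω, ∑ k, H k (Y ω) ∂μ := by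
  have hmass : ∀ k, μ (I ⁻¹' {k}) = 1 / Fintype.card ι := fun k => by
    rw [← Measure.map_apply hI (measurableSet_singleton k), hunif k]
  rw [hIY.integral_comp_eq_sum hI hY hH hint, integral_finsetSum _ fun k _ =>
    hIY.integrable_comp_of_integrable_comp_randomIndex hI hY hH hint (by simp [hmass k]),
    Finset.mul_sum]
  simp [measureReal_def, hmass]

end IndependentIndex

section Centred

variable {Ω : Type*} [MeasurableSpace Ω] {μ : Measure Ω} [IsFiniteMeasure μ] {κ : Type*}
  [Fintype κ]

lemma integral_dotProduct_eq_zero {β : Type*} [MeasurableSpace β] {U : Ω → κ → ℝ} {V : Ω → β}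
    (hUV : IndepFun U V μ) (hU : Measurable U) (hV : Measurable V) (hUint : Integrable U μ)
    (hUmean : ∀ j, ∫ ω, U ω j ∂μ = 0) {c : β → κ → ℝ} (hc : Measurable c) :
    ∫ ω, U ω ⬝ᵥ c (V ω) ∂μ = 0 := by
  set φ : (κ → ℝ) × β → ℝ := fun p => p.1 ⬝ᵥ c p.2
  have hφ : Measurable φ := by fun_prop
  have hcoord : ∀ j, Integrable (fun u : κ → ℝ => u j) (μ.map U) := fun j =>
    (integrable_map_measure (measurable_pi_apply j).aestronglyMeasurable hU.aemeasurable).2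
      (hUint.eval j)
  have hinner : ∀ b, ∫ u, φ (u, b) ∂(μ.map U) = 0 := by
    intro b
    simp only [φ, dotProduct]
    rw [integral_finsetSum _ fun j _ => (hcoord j).mul_const _]
    refine Finset.sum_eq_zero fun j _ => ?_
    rw [integral_mul_const, integral_map hU.aemeasurable
      (measurable_pi_apply j).aestronglyMeasurable, hUmean j, zero_mul]
  calc ∫ ω, U ω ⬝ᵥ c (V ω) ∂μ = ∫ p, φ p ∂(μ.map fun ω => (U ω, V ω)) :=
        (integral_map (hU.prodMk hV).aemeasurable hφ.aestronglyMeasurable).symm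
    _ = ∫ p, φ p ∂((μ.map U).prod (μ.map V)) := by
        rw [(indepFun_iff_map_prod_eq_prod_map_map hU.aemeasurable hV.aemeasurable).1 hUV]
    _ = 0 := by
        by_cases hint : Integrable φ ((μ.map U).prod (μ.map V))
        · simp [integral_prod_symm _ hint, hinner]
        · exact integral_undef hint

lemma integral_dotProduct_sum_compl_eq_zero {ι : Type*} [Fintype ι] [DecidableEq ι]
    {X : ι → Ω → κ → ℝ} {s : Finset ι} {k : ι}
    (hindep : IndepFun (X k) (fun ω (j : {j // j ∉ s}) => X j ω) μ)
    (hX : ∀ i, Measurable (X i)) (hXk : Integrable (X k) μ) (hmean : ∀ j, ∫ ω, X k ω j ∂μ = 0)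
    {F : (κ → ℝ) → κ → ℝ} (hF : Measurable F) :
    ∫ ω, X k ω ⬝ᵥ F (∑ i ∈ sᶜ, X i ω) ∂μ = 0 := by
  simp_rw [Finset.sum_subtype sᶜ fun _ => Finset.mem_compl]
  exact hindep.integral_dotProduct_eq_zero (hX k) (measurable_pi_lambda _ fun j => hX j) hXk
    hmean (c := fun x => F (∑ j, x j)) (by fun_prop)

end Centred

end ProbabilityTheory.IndepFun

lemma integral_dotProduct_sum_compl_randomIndex_eq_zero {Ω ι κ : Type*} [MeasurableSpace Ω]
    {μ : Measure Ω} [IsFiniteMeasure μ] [Fintype ι] [DecidableEq ι] [MeasurableSpace ι]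
    [MeasurableSingletonClass ι] [Fintype κ] {X : ι → Ω → κ → ℝ} {A : ι → Finset ι}
    {I : Ω → ι} (hX : ∀ i, Measurable (X i)) (hXint : ∀ i, Integrable (X i) μ)
    (hmean : ∀ i j, ∫ ω, X i ω j ∂μ = 0)
    (hlocal : ∀ i, IndepFun (X i) (fun ω (j : {j // j ∉ A i}) => X j ω) μ)
    (hI : Measurable I) (hIX : IndepFun I (fun ω i => X i ω) μ)
    {F : (κ → ℝ) → κ → ℝ} (hF : Measurable F) :
    ∫ ω, X (I ω) ω ⬝ᵥ F (∑ i ∈ (A (I ω))ᶜ, X i ω) ∂μ = 0 := by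
  by_cases hint : Integrable (fun ω => X (I ω) ω ⬝ᵥ F (∑ i ∈ (A (I ω))ᶜ, X i ω)) μ
  · rw [hIX.integral_comp_eq_sum hI (measurable_pi_lambda _ hX)
      (H := fun k (x : ι → κ → ℝ) => x k ⬝ᵥ F (∑ i ∈ (A k)ᶜ, x i)) (fun k => by fun_prop) hint]
    refine Finset.sum_eq_zero fun k _ => ?_
    rw [(hlocal k).integral_dotProduct_sum_compl_eq_zero hX (hXint k) (hmean k) hF, mul_zero]
  · exact integral_undef hint

theorem steinCoupling_local_dependence_general {Ω : Type*} [MeasurableSpace Ω] (μ : Measure Ω)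
    [IsProbabilityMeasure μ] {d n : ℕ}
    {ι : Type*} [Fintype ι] [Nonempty ι] [DecidableEq ι]
    [MeasurableSpace ι] [MeasurableSingletonClass ι]
    (hcard : Fintype.card ι = n)
    (X : ι → Ω → Fin d → ℝ) (A : ι → Finset ι) (I : Ω → ι)
    (hXmeas : ∀ i, Measurable (X i))
    (hX2 : ∀ i, MemLp (X i) 2 μ)
    (hXmean : ∀ i j, ∫ ω, X i ω j ∂μ = 0)
    -- `X i` is independent of the collection `(X j)_{j ∈ A iᶜ}`
    (hlocal : ∀ i, IndepFun (X i) (fun ω => fun j : {j // j ∉ A i} => X (j : ι) ω) μ)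
    (hI : Measurable I)
    -- `I` is uniformly distributed on `ι`
    (hIunif : ∀ i : ι, μ.map I {i} = 1 / Fintype.card ι)
    -- `I` is independent of the whole collection `(X i)_{i ∈ ι}`
    (hIindep : IndepFun I (fun ω => fun i : ι => X i ω) μ) :
    IsSteinCoupling μ (fun ω => ∑ i, X i ω)
      (fun ω => ∑ i ∈ (A (I ω))ᶜ, X i ω)
      (fun ω => -((n : ℝ) • X (I ω) ω)) := by
  have hn : (n : ℝ) ≠ 0 := by rw [← hcard]; exact_mod_cast Fintype.card_ne_zero
  have hY : Measurable fun ω i => X i ω := measurable_pi_lambda _ hXmeas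
  refine ⟨by fun_prop,
    measurable_comp_randomIndex (fun k ω => ∑ i ∈ (A k)ᶜ, X i ω) hI fun k => by fun_prop,
    measurable_comp_randomIndex (fun k ω => -((n : ℝ) • X k ω)) hI fun k => by fun_prop,
    memLp_finsetSum _ fun i _ => hX2 i,
    memLp_comp_randomIndex (fun k ω => ∑ i ∈ (A k)ᶜ, X i ω) hI fun k =>
      memLp_finsetSum _ fun i _ => hX2 i,
    memLp_comp_randomIndex (fun k ω => -((n : ℝ) • X k ω)) hI fun k =>
      ((hX2 k).const_smul (n : ℝ)).neg,
    fun F hF _ hGW _ => ?_⟩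
  change (∫ ω, (-((n : ℝ) • X (I ω) ω)) ⬝ᵥ F (∑ i ∈ (A (I ω))ᶜ, X i ω) ∂μ)
    - ∫ ω, (-((n : ℝ) • X (I ω) ω)) ⬝ᵥ F (∑ i, X i ω) ∂μ = ∫ ω, (∑ i, X i ω) ⬝ᵥ F (∑ i, X i ω) ∂μ
  have hW' : ∫ ω, (-((n : ℝ) • X (I ω) ω)) ⬝ᵥ F (∑ i ∈ (A (I ω))ᶜ, X i ω) ∂μ = 0 := by
    simp only [neg_dotProduct, smul_dotProduct, smul_eq_mul, integral_neg, integral_const_mul,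
      integral_dotProduct_sum_compl_randomIndex_eq_zero hXmeas
        (fun i => (hX2 i).integrable one_le_two) hXmean hlocal hI hIindep hF, mul_zero, neg_zero]
  have hW : ∫ ω, (-((n : ℝ) • X (I ω) ω)) ⬝ᵥ F (∑ i, X i ω) ∂μ
      = -∫ ω, (∑ i, X i ω) ⬝ᵥ F (∑ i, X i ω) ∂μ := by
    rw [hIindep.integral_comp_eq_average hI hY
      (H := fun k (x : ι → Fin d → ℝ) => (-((n : ℝ) • x k)) ⬝ᵥ F (∑ i, x i))
      (fun k => by fun_prop) hIunif hGW, hcard, ← integral_const_mul, ← integral_neg]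
    congr 1 with ω
    simp [neg_dotProduct, smul_dotProduct, ← Finset.mul_sum, sum_dotProduct, hn]
  rw [hW', hW]
  ring

/-- **Section 5.3 (local dependence)**: for centered, locally dependent summands
`(X_i)_{i ∈ ι}` with dependency neighbourhoods `A_i ∋ i`, and `I` uniform on `ι`,
independent of the `X_i`, the triple
`(Σ_i X_i, Σ_{i ∉ A_I} X_i, −n X_I)` is a `d`-dimensional Stein coupling. -/
theorem steinCoupling_local_dependence {Ω : Type*} [MeasurableSpace Ω] (μ : Measure Ω)
    [IsProbabilityMeasure μ] {d n : ℕ}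
    {ι : Type*} [Fintype ι] [Nonempty ι] [DecidableEq ι]
    [MeasurableSpace ι] [MeasurableSingletonClass ι]
    (hcard : Fintype.card ι = n)
    (X : ι → Ω → Fin d → ℝ) (A : ι → Finset ι) (I : Ω → ι)
    (hXmeas : ∀ i, Measurable (X i))
    (hX2 : ∀ i, MemLp (X i) 2 μ)
    (hXmean : ∀ i j, ∫ ω, X i ω j ∂μ = 0)
    (hAi : ∀ i, i ∈ A i)
    -- `X i` is independent of the collection `(X j)_{j ∈ A iᶜ}`
    (hlocal : ∀ i, IndepFun (X i) (fun ω => fun j : {j // j ∉ A i} => X (j : ι) ω) μ)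
    (hI : Measurable I)
    -- `I` is uniformly distributed on `ι`
    (hIunif : ∀ i : ι, μ.map I {i} = 1 / Fintype.card ι)
    -- `I` is independent of the whole collection `(X i)_{i ∈ ι}`
    (hIindep : IndepFun I (fun ω => fun i : ι => X i ω) μ) :
    IsSteinCoupling μ (fun ω => ∑ i, X i ω)
      (fun ω => ∑ i ∈ (A (I ω))ᶜ, X i ω)
      (fun ω => -((n : ℝ) • X (I ω) ω)) :=
  steinCoupling_local_dependence_general μ hcard X A I hXmeas hX2 hXmean hlocal hI hIunif hIindep

end
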